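/- arXiv:1608.01568 — 7 statements merged into one kernel-verified Lean document; each statement's English description precedes it below -/
import Mathlib

section
/- Let S be a finite sample space with a probability distribution D, and let X_1,…,X_N : S → {0,1} be random variables. Let N' ≤ N and reals λ_i, p_i for i ∈ [N] be such that 0 < λ_i < p_i ≤ E_{s∼D}[X_i] for i ≤ N' and 1 > λ_j > p_j ≥ E_{s∼D}[X_j] for N' < j ≤ N. If m is a positive integer with Σ_{i=1}^N exp(-D(λ_i||p_i)·m) ≤ 1, then there exists a multiset S' = {s_1,…,s_m} ⊆ S such that for the uniform distribution on S', E[X_i] ≥ λ_i for all i ≤ N' and E[X_j] ≤ λ_j for all N' < j ≤ N. -/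
/-!
Sample `f : Fin m → S` with independent `w`-distributed coordinates and, for each `i`, tilt by
`exp (θᵢ (∑ⱼ Xᵢ (f j) - λᵢ m))`, where `θᵢ` has the sign of `λᵢ - pᵢ`. This estimator exceeds `1`
whenever `f` violates the `i`-th constraint, and its mean is at most `exp (-D(λᵢ‖pᵢ) m)` (the
Chernoff bound). Hence the sum of the estimators has mean at most `1`, so some sample has all of
them at most `1` and violates no constraint.
-/

open Finset Real

noncomputable section

def bernoulliKL (lam p : ℝ) : ℝ :=
  lam * log (lam / p) + (1 - lam) * log ((1 - lam) / (1 - p))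

/-- The optimal tilt: `exp (chernoffTilt lam p) = lam (1 - p) / (p (1 - lam))`. -/
def chernoffTilt (lam p : ℝ) : ℝ :=
  log (lam / p) - log ((1 - lam) / (1 - p))

end

section Scalar

variable {lam p : ℝ}

-- With `x / 0 = 0` and `log 0 = 0`, `bernoulliKL lam p` is negative at `p = 0` and `p = 1`,
-- so a nonnegative divergence keeps `p` away from the endpoints.

lemma bernoulliKL_one_right_neg (h0 : 0 < lam) (h1 : lam < 1) : bernoulliKL lam 1 < 0 := by
  simpa [bernoulliKL] using mul_neg_of_pos_of_neg h0 (log_neg h0 h1)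

lemma bernoulliKL_zero_right_neg (h0 : 0 < lam) (h1 : lam < 1) : bernoulliKL lam 0 < 0 := by
  simpa [bernoulliKL] using
    mul_neg_of_pos_of_neg (sub_pos.2 h1) (log_neg (sub_pos.2 h1) (by linarith))

lemma lt_one_of_bernoulliKL_nonneg (h0 : 0 < lam) (hlp : lam < p) (hp : p ≤ 1)
    (hD : 0 ≤ bernoulliKL lam p) : p < 1 := by
  refine hp.lt_of_ne fun h => ?_
  subst h
  linarith [bernoulliKL_one_right_neg h0 hlp]

lemma pos_of_bernoulliKL_nonneg (h1 : lam < 1) (hpl : p < lam) (hp : 0 ≤ p)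
    (hD : 0 ≤ bernoulliKL lam p) : 0 < p := by
  refine hp.lt_of_ne fun h => ?_
  subst h
  linarith [bernoulliKL_zero_right_neg hpl h1]

lemma exp_chernoffTilt (hl0 : 0 < lam) (hl1 : lam < 1) (hp0 : 0 < p) (hp1 : p < 1) :
    exp (chernoffTilt lam p) = lam * (1 - p) / (p * (1 - lam)) := by
  have : (0 : ℝ) < 1 - lam := sub_pos.2 hl1
  have : (0 : ℝ) < 1 - p := sub_pos.2 hp1
  rw [chernoffTilt, exp_sub, exp_log (by positivity), exp_log (by positivity)]
  field_simp

lemma sub_mul_chernoffTilt_pos (hl0 : 0 < lam) (hl1 : lam < 1) (hp0 : 0 < p) (hp1 : p < 1)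
    (hne : lam ≠ p) : 0 < (lam - p) * chernoffTilt lam p := by
  have h1l : (0 : ℝ) < 1 - lam := sub_pos.2 hl1
  have h1p : (0 : ℝ) < 1 - p := sub_pos.2 hp1
  rw [chernoffTilt, log_div hl0.ne' hp0.ne', log_div h1l.ne' h1p.ne']
  rcases hne.lt_or_gt with h | h
  · have := log_lt_log hl0 h
    have := log_lt_log h1p (by linarith : 1 - p < 1 - lam)
    nlinarith
  · have := log_lt_log hp0 h
    have := log_lt_log h1l (by linarith : 1 - lam < 1 - p)
    nlinarith

-- The left side is monotone in `μ` and equals the right side at `μ = p`.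
lemma one_add_mul_exp_chernoffTilt_le {μ : ℝ} (hl0 : 0 < lam) (hl1 : lam < 1) (hp0 : 0 < p)
    (hp1 : p < 1) (hμ : 0 ≤ (p - lam) * (μ - p)) :
    (1 + μ * (exp (chernoffTilt lam p) - 1)) * exp (-(chernoffTilt lam p * lam)) ≤
      exp (-bernoulliKL lam p) := by
  have h1l : (0 : ℝ) < 1 - lam := sub_pos.2 hl1
  have h1p : (0 : ℝ) < 1 - p := sub_pos.2 hp1
  have hmean : 1 + μ * (exp (chernoffTilt lam p) - 1) ≤ (1 - p) / (1 - lam) := by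
    have hT : exp (chernoffTilt lam p) - 1 = (lam - p) / (p * (1 - lam)) := by
      rw [exp_chernoffTilt hl0 hl1 hp0 hp1]
      field_simp
      ring
    rw [hT, le_div_iff₀ h1l]
    field_simp
    nlinarith
  have hexp : (1 - p) / (1 - lam) * exp (-(chernoffTilt lam p * lam)) =
      exp (-bernoulliKL lam p) := by
    rw [← exp_log (div_pos h1p h1l), ← exp_add, log_div h1p.ne' h1l.ne', bernoulliKL,
      chernoffTilt, log_div h1l.ne' h1p.ne']
    ring_nf
  exact hexp ▸ mul_le_mul_of_nonneg_right hmean (exp_pos _).le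

lemma sub_mul_nonneg_of_exp_chernoffTilt_mul_le_one (hl0 : 0 < lam) (hl1 : lam < 1)
    (hp0 : 0 < p) (hp1 : p < 1) (hne : lam ≠ p) {x : ℝ}
    (h : exp (chernoffTilt lam p * x) ≤ 1) : 0 ≤ (p - lam) * x := by
  have hθ := sub_mul_chernoffTilt_pos hl0 hl1 hp0 hp1 hne
  have hx := exp_le_one_iff.1 h
  by_contra! hneg
  nlinarith [mul_pos hθ (neg_pos.2 hneg), mul_nonpos_of_nonneg_of_nonpos (sq_nonneg (lam - p)) hx]

end Scalar

/-- `0 ≤ (p - lam) * (μ - p)` covers both tails: `lam < p ≤ μ` and `μ ≤ p < lam`. -/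
structure IsChernoffRegime (lam p μ : ℝ) : Prop where
  lam_pos : 0 < lam
  lam_lt_one : lam < 1
  p_pos : 0 < p
  p_lt_one : p < 1
  lam_ne : lam ≠ p
  mean_side : 0 ≤ (p - lam) * (μ - p)

namespace IsChernoffRegime

variable {lam p μ : ℝ}

lemma of_lower_tail (h0 : 0 < lam) (hlp : lam < p) (hpμ : p ≤ μ) (hμ1 : μ ≤ 1)
    (hD : 0 ≤ bernoulliKL lam p) : IsChernoffRegime lam p μ where
  lam_pos := h0
  lam_lt_one := by linarith [lt_one_of_bernoulliKL_nonneg h0 hlp (hpμ.trans hμ1) hD]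
  p_pos := h0.trans hlp
  p_lt_one := lt_one_of_bernoulliKL_nonneg h0 hlp (hpμ.trans hμ1) hD
  lam_ne := hlp.ne
  mean_side := mul_nonneg (sub_nonneg.2 hlp.le) (sub_nonneg.2 hpμ)

lemma of_upper_tail (h1 : lam < 1) (hpl : p < lam) (hμp : μ ≤ p) (hμ0 : 0 ≤ μ)
    (hD : 0 ≤ bernoulliKL lam p) : IsChernoffRegime lam p μ where
  lam_pos := by linarith [pos_of_bernoulliKL_nonneg h1 hpl (hμ0.trans hμp) hD]
  lam_lt_one := h1
  p_pos := pos_of_bernoulliKL_nonneg h1 hpl (hμ0.trans hμp) hD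
  p_lt_one := hpl.trans h1
  lam_ne := hpl.ne'
  mean_side := mul_nonneg_of_nonpos_of_nonpos (sub_nonpos.2 hpl.le) (sub_nonpos.2 hμp)

end IsChernoffRegime

lemma exp_le_of_sum_exp_le {ι : Type*} [Fintype ι] {g : ι → ℝ} {c : ℝ}
    (h : ∑ i, exp (g i) ≤ c) (i : ι) : exp (g i) ≤ c :=
  (single_le_sum (fun i _ => (exp_pos (g i)).le) (mem_univ i)).trans h

lemma exists_le_of_sum_mul_le {ι : Type*} [Fintype ι] {w g : ι → ℝ} {c : ℝ}
    (hw : ∀ i, 0 ≤ w i) (hw1 : ∑ i, w i = 1) (h : ∑ i, w i * g i ≤ c) : ∃ i, g i ≤ c := by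
  by_contra! hgt
  obtain ⟨i, -, hi⟩ := exists_lt_of_sum_lt (by simp [hw1] : ∑ _i : ι, (0 : ℝ) < ∑ i, w i)
  have : ∑ i, w i * c < ∑ i, w i * g i :=
    sum_lt_sum (fun j _ => mul_le_mul_of_nonneg_left (hgt j).le (hw j))
      ⟨i, mem_univ i, mul_lt_mul_of_pos_left (hgt i) hi⟩
  rw [← sum_mul, hw1, one_mul] at this
  linarith

section Sampling

variable {S : Type*} [Fintype S] {w : S → ℝ}

lemma sum_prod_eq_one (hw1 : ∑ s, w s = 1) (m : ℕ) : ∑ f : Fin m → S, ∏ j, w (f j) = 1 := by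
  rw [← Fintype.sum_pow, hw1, one_pow]

lemma sum_prod_mul_exp_sum_eq (m : ℕ) (w X : S → ℝ) (θ c : ℝ) :
    ∑ f : Fin m → S, (∏ j, w (f j)) * exp (θ * (∑ j, X (f j) - c)) =
      (∑ s, w s * exp (θ * X s)) ^ m * exp (-(θ * c)) := by
  rw [Fintype.sum_pow, sum_mul]
  refine sum_congr rfl fun f _ => ?_
  rw [mul_sub, sub_eq_add_neg, exp_add, mul_sum, exp_sum, ← mul_assoc,
    ← prod_mul_distrib]

lemma sum_mul_exp_of_bernoulli {X : S → ℝ} (hX : ∀ s, X s = 0 ∨ X s = 1)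
    (hw1 : ∑ s, w s = 1) (θ : ℝ) :
    ∑ s, w s * exp (θ * X s) = 1 + (∑ s, w s * X s) * (exp θ - 1) := by
  have hpt : ∀ s, w s * exp (θ * X s) = w s + w s * X s * (exp θ - 1) := fun s => by
    rcases hX s with h | h <;> simp [h, mul_sub]
  simp only [hpt, sum_add_distrib, ← sum_mul, hw1]

lemma sum_mul_mem_Icc_of_bernoulli {X : S → ℝ} (hw : ∀ s, 0 ≤ w s) (hw1 : ∑ s, w s = 1)
    (hX : ∀ s, X s = 0 ∨ X s = 1) : ∑ s, w s * X s ∈ Set.Icc 0 1 := by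
  have hpt : ∀ s, 0 ≤ w s * X s ∧ w s * X s ≤ w s := fun s => by
    rcases hX s with h | h <;> simp [h, hw s]
  refine ⟨sum_nonneg fun s _ => (hpt s).1, hw1 ▸ sum_le_sum fun s _ => (hpt s).2⟩

theorem sum_prod_mul_exp_chernoffTilt_le {X : S → ℝ} {lam p : ℝ} (hw : ∀ s, 0 ≤ w s)
    (hw1 : ∑ s, w s = 1) (hX : ∀ s, X s = 0 ∨ X s = 1)
    (h : IsChernoffRegime lam p (∑ s, w s * X s)) (m : ℕ) :
    ∑ f : Fin m → S, (∏ j, w (f j)) * exp (chernoffTilt lam p * (∑ j, X (f j) - lam * m)) ≤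
      exp (-bernoulliKL lam p * m) := by
  have hmgf : 0 ≤ ∑ s, w s * exp (chernoffTilt lam p * X s) :=
    sum_nonneg fun s _ => mul_nonneg (hw s) (exp_pos _).le
  have hpow : ∀ x : ℝ, exp (x * m) = exp x ^ m := fun x => by rw [← exp_nat_mul, mul_comm]
  rw [sum_prod_mul_exp_sum_eq, show -(chernoffTilt lam p * (lam * m)) =
    -(chernoffTilt lam p * lam) * m by ring, hpow, hpow, ← mul_pow]
  refine pow_le_pow_left₀ (mul_nonneg hmgf (exp_pos _).le) ?_ m
  rw [sum_mul_exp_of_bernoulli hX hw1]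
  exact one_add_mul_exp_chernoffTilt_le h.lam_pos h.lam_lt_one h.p_pos h.p_lt_one h.mean_side

end Sampling

theorem derandomized_chernoff_union_bound_general
    (S : Type*) [Fintype S] (w : S → ℝ) (hw : ∀ s, 0 ≤ w s) (hw1 : ∑ s, w s = 1)
    (N N' : ℕ)
    (X : Fin N → S → ℝ) (hX : ∀ i s, X i s = 0 ∨ X i s = 1)
    (lam p : Fin N → ℝ)
    (hlow : ∀ i : Fin N, i.val < N' →
      0 < lam i ∧ lam i < p i ∧ p i ≤ ∑ s, w s * X i s)
    (hhigh : ∀ i : Fin N, N' ≤ i.val →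
      lam i < 1 ∧ p i < lam i ∧ ∑ s, w s * X i s ≤ p i)
    (m : ℕ) (hm : 0 < m)
    (hsum : ∑ i : Fin N,
      Real.exp (-(lam i * Real.log (lam i / p i) +
        (1 - lam i) * Real.log ((1 - lam i) / (1 - p i))) * m) ≤ 1) :
    ∃ f : Fin m → S,
      (∀ i : Fin N, i.val < N' → (∑ j, X i (f j)) / m ≥ lam i) ∧
      (∀ i : Fin N, N' ≤ i.val → (∑ j, X i (f j)) / m ≤ lam i) := by
  have hm' : (0 : ℝ) < m := Nat.cast_pos.2 hm
  have hKL : ∀ i, 0 ≤ bernoulliKL (lam i) (p i) := fun i => by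
    have := exp_le_one_iff.1
      (exp_le_of_sum_exp_le (g := fun i => -bernoulliKL (lam i) (p i) * m) hsum i)
    nlinarith
  have hreg : ∀ i, IsChernoffRegime (lam i) (p i) (∑ s, w s * X i s) := fun i => by
    obtain ⟨hμ0, hμ1⟩ := sum_mul_mem_Icc_of_bernoulli hw hw1 (hX i)
    rcases lt_or_ge i.val N' with hi | hi
    · obtain ⟨h0, hlp, hpμ⟩ := hlow i hi
      exact .of_lower_tail h0 hlp hpμ hμ1 (hKL i)
    · obtain ⟨h1, hpl, hμp⟩ := hhigh i hi
      exact .of_upper_tail h1 hpl hμp hμ0 (hKL i)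
  obtain ⟨f, hf⟩ : ∃ f : Fin m → S,
      ∑ i, exp (chernoffTilt (lam i) (p i) * (∑ j, X i (f j) - lam i * m)) ≤ 1 := by
    refine exists_le_of_sum_mul_le (fun f => prod_nonneg fun j _ => hw (f j))
      (sum_prod_eq_one hw1 m) ?_
    calc _ = ∑ i, ∑ f : Fin m → S, (∏ j, w (f j)) *
            exp (chernoffTilt (lam i) (p i) * (∑ j, X i (f j) - lam i * m)) := by
          simp only [mul_sum]
          exact sum_comm
      _ ≤ ∑ i, exp (-bernoulliKL (lam i) (p i) * m) := sum_le_sum fun i _ =>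
          sum_prod_mul_exp_chernoffTilt_le hw hw1 (hX i) (hreg i) m
      _ ≤ 1 := hsum
  have hgood : ∀ i, 0 ≤ (p i - lam i) * (∑ j, X i (f j) - lam i * m) := fun i =>
    sub_mul_nonneg_of_exp_chernoffTilt_mul_le_one (hreg i).lam_pos (hreg i).lam_lt_one
      (hreg i).p_pos (hreg i).p_lt_one (hreg i).lam_ne
      (exp_le_of_sum_exp_le hf i)
  refine ⟨f, fun i hi => ?_, fun i hi => ?_⟩
  · rw [ge_iff_le, le_div_iff₀ hm']
    nlinarith [hgood i, hlow i hi]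
  · rw [div_le_iff₀ hm']
    nlinarith [hgood i, hhigh i hi]

/-- Derandomized Chernoff bound with union bound. If
`Σ_i exp(-D(λ_i‖p_i)·m) ≤ 1` then there is a multiset `S' = {s_1,…,s_m} ⊆ S`
(given as `f : Fin m → S`) such that the empirical mean of `X_i` on `S'` is at least
`λ_i` for `i < N'` and at most `λ_j` for `j ≥ N'`. -/
theorem derandomized_chernoff_union_bound
    (S : Type*) [Fintype S] (w : S → ℝ) (hw : ∀ s, 0 ≤ w s) (hw1 : ∑ s, w s = 1)
    (N N' : ℕ) (hN' : N' ≤ N)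
    (X : Fin N → S → ℝ) (hX : ∀ i s, X i s = 0 ∨ X i s = 1)
    (lam p : Fin N → ℝ)
    (hlow : ∀ i : Fin N, i.val < N' →
      0 < lam i ∧ lam i < p i ∧ p i ≤ ∑ s, w s * X i s)
    (hhigh : ∀ i : Fin N, N' ≤ i.val →
      lam i < 1 ∧ p i < lam i ∧ ∑ s, w s * X i s ≤ p i)
    (m : ℕ) (hm : 0 < m)
    (hsum : ∑ i : Fin N,
      Real.exp (-(lam i * Real.log (lam i / p i) +
        (1 - lam i) * Real.log ((1 - lam i) / (1 - p i))) * m) ≤ 1) :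
    ∃ f : Fin m → S,
      (∀ i : Fin N, i.val < N' → (∑ j, X i (f j)) / m ≥ lam i) ∧
      (∀ i : Fin N, N' ≤ i.val → (∑ j, X i (f j)) / m ≤ lam i) :=
  derandomized_chernoff_union_bound_general S w hw hw1 N N' X hX lam p hlow hhigh m hm hsum
end

section
/- Let S be a finite sample space with probability distribution D and X_1,…,X_N : S → {0,1} with means p_i = E_D[X_i] ∈ (0,1). Suppose for i ≤ N', λ_i < p_i, and for j > N', λ_j > p_j, with all λ_i ∈ (0,1). Define α_i = ((1-p_i)λ_i)/(p_i(1-λ_i)) and γ_i = (1-λ_i)/(1-p_i). Then for any s_1,…,s_ℓ ∈ S and the potential P_ℓ = Σ_i exp(-D(λ_i||p_i)m) γ_i^ℓ α_i^{Z_{ℓ,i}} where Z_{ℓ,i} = X_i(s_1)+⋯+X_i(s_ℓ), it holds that E_{s∼D}[Σ_i exp(-D(λ_i||p_i)m) γ_i^{ℓ+1} α_i^{Z_{ℓ,i}+X_i(s)}] ≤ P_ℓ. -/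
/-!
Each summand of the potential is a martingale: since `X i` is `{0,1}`-valued with mean `p i`,
`E[α^{X i}] = α p + (1 - p) = (1 - p) / (1 - λ) = 1 / γ`, so one more sample multiplies the
expected summand by `γ · γ⁻¹ = 1`. The inequality therefore holds with equality.
-/

open Finset

theorem sum_mul_pow_of_le_one {S R : Type*} [Fintype S] [CommRing R] {w : S → R}
    (hw1 : ∑ s, w s = 1) {X : S → ℕ} (hX : ∀ s, X s ≤ 1) (a : R) :
    ∑ s, w s * a ^ X s = a * ∑ s, w s * (X s : R) + (1 - ∑ s, w s * (X s : R)) := by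
  have hpow : ∀ s, a ^ X s = 1 + (a - 1) * (X s : R) := fun s => by
    rcases Nat.le_one_iff_eq_zero_or_eq_one.mp (hX s) with h | h <;> simp [h]
  simp only [hpow, mul_add, mul_one, sum_add_distrib, hw1, mul_left_comm _ (a - 1),
    ← mul_sum]
  ring

theorem div_mul_tilt_eq_one {K : Type*} [Field K] {p lam : K}
    (hp0 : p ≠ 0) (hp1 : 1 - p ≠ 0) (hlam1 : 1 - lam ≠ 0) :
    (1 - lam) / (1 - p) * ((1 - p) * lam / (p * (1 - lam)) * p + (1 - p)) = 1 := by
  field_simp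
  ring

theorem sum_mul_geometric_step {S R : Type*} [Fintype S] [CommRing R] {w : S → R}
    (hw1 : ∑ s, w s = 1) {X : S → ℕ} (hX : ∀ s, X s ≤ 1) {α γ : R}
    (hαγ : γ * (α * ∑ s, w s * (X s : R) + (1 - ∑ s, w s * (X s : R))) = 1)
    (c : R) (ℓ n : ℕ) :
    ∑ s, w s * (c * γ ^ (ℓ + 1) * α ^ (n + X s)) = c * γ ^ ℓ * α ^ n := by
  calc ∑ s, w s * (c * γ ^ (ℓ + 1) * α ^ (n + X s))
      = c * γ ^ ℓ * α ^ n * (γ * ∑ s, w s * α ^ X s) := by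
        rw [mul_sum, mul_sum]
        refine sum_congr rfl fun s _ => ?_
        ring
    _ = c * γ ^ ℓ * α ^ n := by
        rw [sum_mul_pow_of_le_one hw1 hX, hαγ, mul_one]

theorem potential_nonincreasing_general
    (S : Type*) [Fintype S] (w : S → ℝ) (hw1 : ∑ s, w s = 1)
    (N : ℕ)
    (X : Fin N → S → ℕ) (hX : ∀ i s, X i s ≤ 1)
    (p lam : Fin N → ℝ)
    (hp : ∀ i, p i = ∑ s, w s * (X i s : ℝ))
    (hp0 : ∀ i, 0 < p i) (hp1 : ∀ i, p i < 1)
    (hlam1 : ∀ i, lam i < 1)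
    (m ℓ : ℕ) (s : Fin ℓ → S) :
    ∑ t, w t * (∑ i : Fin N,
        Real.exp (-(lam i * Real.log (lam i / p i) +
          (1 - lam i) * Real.log ((1 - lam i) / (1 - p i))) * m) *
        ((1 - lam i) / (1 - p i)) ^ (ℓ + 1) *
        ((1 - p i) * lam i / (p i * (1 - lam i))) ^ ((∑ j, X i (s j)) + X i t))
      ≤ ∑ i : Fin N,
        Real.exp (-(lam i * Real.log (lam i / p i) +
          (1 - lam i) * Real.log ((1 - lam i) / (1 - p i))) * m) *
        ((1 - lam i) / (1 - p i)) ^ ℓ *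
        ((1 - p i) * lam i / (p i * (1 - lam i))) ^ (∑ j, X i (s j)) := by
  refine le_of_eq ?_
  simp only [mul_sum]
  rw [sum_comm]
  refine sum_congr rfl fun i _ => sum_mul_geometric_step hw1 (hX i) ?_ _ _ _
  rw [← hp i]
  exact div_mul_tilt_eq_one (hp0 i).ne' (sub_ne_zero.mpr (hp1 i).ne')
    (sub_ne_zero.mpr (hlam1 i).ne')

/-- The pessimistic estimator is non-increasing in expectation:
`E_{s∼D}[Σ_i exp(-D(λ_i‖p_i)m) γ_i^{ℓ+1} α_i^{Z_{ℓ,i}+X_i(s)}] ≤ P_ℓ`. -/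
theorem potential_nonincreasing
    (S : Type*) [Fintype S] (w : S → ℝ) (hw : ∀ s, 0 ≤ w s) (hw1 : ∑ s, w s = 1)
    (N N' : ℕ) (hN' : N' ≤ N)
    (X : Fin N → S → ℕ) (hX : ∀ i s, X i s ≤ 1)
    (p lam : Fin N → ℝ)
    (hp : ∀ i, p i = ∑ s, w s * (X i s : ℝ))
    (hp0 : ∀ i, 0 < p i) (hp1 : ∀ i, p i < 1)
    (hlam0 : ∀ i, 0 < lam i) (hlam1 : ∀ i, lam i < 1)
    (hlow : ∀ i : Fin N, i.val < N' → lam i < p i)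
    (hhigh : ∀ i : Fin N, N' ≤ i.val → p i < lam i)
    (m ℓ : ℕ) (s : Fin ℓ → S) :
    ∑ t, w t * (∑ i : Fin N,
        Real.exp (-(lam i * Real.log (lam i / p i) +
          (1 - lam i) * Real.log ((1 - lam i) / (1 - p i))) * m) *
        ((1 - lam i) / (1 - p i)) ^ (ℓ + 1) *
        ((1 - p i) * lam i / (p i * (1 - lam i))) ^ ((∑ j, X i (s j)) + X i t))
      ≤ ∑ i : Fin N,
        Real.exp (-(lam i * Real.log (lam i / p i) +
          (1 - lam i) * Real.log ((1 - lam i) / (1 - p i))) * m) *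
        ((1 - lam i) / (1 - p i)) ^ ℓ *
        ((1 - p i) * lam i / (p i * (1 - lam i))) ^ (∑ j, X i (s j)) :=
  potential_nonincreasing_general S w hw1 N X hX p lam hp hp0 hp1 hlam1 m ℓ s
end

section
/- With notation of the pessimistic-estimator potential: if P_m = Σ_{i=1}^N exp(-D(λ_i||p_i)m) γ_i^m α_i^{Z_{m,i}} ≤ 1, where α_i = ((1-p_i)λ_i)/(p_i(1-λ_i)) and γ_i = (1-λ_i)/(1-p_i), then for every i, α_i^{Z_{m,i}} ≤ α_i^{λ_i m}; consequently Z_{m,i} ≥ λ_i m whenever α_i < 1 and Z_{m,i} ≤ λ_i m whenever α_i > 1. -/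
/-! With `γ = (1-λ)/(1-p)` and `α = (λ/p)/γ` one has `exp(-D(λ‖p)) γ = α^(-λ)`, so the `i`-th
term of the potential is exactly `α_i^(Z_{m,i} - λ_i m)`. All terms are positive, so `P_m ≤ 1`
forces each of them to be at most `1`, and comparing exponents of `α_i` gives the bounds on
`Z_{m,i}`. -/

open Real

lemma exp_neg_mul_mul_rpow_eq_div_rpow {a b : ℝ} (ha : 0 < a) (hb : 0 < b) (t m : ℝ) :
    exp (-(t * log a + (1 - t) * log b) * m) * b ^ m = (a / b) ^ (-(t * m)) := by
  rw [rpow_def_of_pos hb, rpow_def_of_pos (div_pos ha hb), ← exp_add, log_div ha.ne' hb.ne']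
  ring_nf

noncomputable def potentialTerm (p lam z m : ℝ) : ℝ :=
  exp (-(lam * log (lam / p) + (1 - lam) * log ((1 - lam) / (1 - p))) * m) *
    ((1 - lam) / (1 - p)) ^ m * ((1 - p) * lam / (p * (1 - lam))) ^ z

section potentialTerm

variable {p lam : ℝ}

lemma potentialTerm_eq_rpow_sub (hp0 : 0 < p) (hp1 : p < 1) (hlam0 : 0 < lam)
    (hlam1 : lam < 1) (z m : ℝ) :
    potentialTerm p lam z m = ((1 - p) * lam / (p * (1 - lam))) ^ (z - lam * m) := by
  have hγ : 0 < (1 - lam) / (1 - p) := div_pos (by linarith) (by linarith)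
  have hα : (1 - p) * lam / (p * (1 - lam)) = lam / p / ((1 - lam) / (1 - p)) := by
    field_simp
  rw [potentialTerm, exp_neg_mul_mul_rpow_eq_div_rpow (div_pos hlam0 hp0) hγ, hα,
    ← rpow_add (div_pos (div_pos hlam0 hp0) hγ), neg_add_eq_sub]

lemma potentialTerm_pos (hp0 : 0 < p) (hp1 : p < 1) (hlam0 : 0 < lam) (hlam1 : lam < 1)
    (z m : ℝ) : 0 < potentialTerm p lam z m := by
  rw [potentialTerm_eq_rpow_sub hp0 hp1 hlam0 hlam1]
  exact rpow_pos_of_pos (div_pos (mul_pos (by linarith) hlam0) (mul_pos hp0 (by linarith))) _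

end potentialTerm

theorem final_potential_conclusion_general
    (N : ℕ) (p lam Z : Fin N → ℝ) (m : ℕ)
    (hp0 : ∀ i, 0 < p i) (hp1 : ∀ i, p i < 1)
    (hlam0 : ∀ i, 0 < lam i) (hlam1 : ∀ i, lam i < 1)
    (hP : ∑ i : Fin N,
        Real.exp (-(lam i * Real.log (lam i / p i) +
          (1 - lam i) * Real.log ((1 - lam i) / (1 - p i))) * m) *
        ((1 - lam i) / (1 - p i)) ^ (m : ℝ) *
        ((1 - p i) * lam i / (p i * (1 - lam i))) ^ (Z i) ≤ 1) :
    ∀ i : Fin N,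
      ((1 - p i) * lam i / (p i * (1 - lam i))) ^ (Z i) ≤
        ((1 - p i) * lam i / (p i * (1 - lam i))) ^ (lam i * m) ∧
      ((1 - p i) * lam i / (p i * (1 - lam i)) < 1 → Z i ≥ lam i * m) ∧
      (1 < (1 - p i) * lam i / (p i * (1 - lam i)) → Z i ≤ lam i * m) := by
  intro i
  have hα : 0 < (1 - p i) * lam i / (p i * (1 - lam i)) :=
    div_pos (mul_pos (by linarith [hp1 i]) (hlam0 i)) (mul_pos (hp0 i) (by linarith [hlam1 i]))
  have hterm : potentialTerm (p i) (lam i) (Z i) m ≤ 1 :=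
    (Finset.single_le_sum (f := fun j => potentialTerm (p j) (lam j) (Z j) m)
      (fun j _ => (potentialTerm_pos (hp0 j) (hp1 j) (hlam0 j) (hlam1 j) _ _).le)
      (Finset.mem_univ i)).trans hP
  rw [potentialTerm_eq_rpow_sub (hp0 i) (hp1 i) (hlam0 i) (hlam1 i), rpow_sub hα,
    div_le_one (rpow_pos_of_pos hα _)] at hterm
  exact ⟨hterm, fun hlt => (rpow_le_rpow_left_iff_of_base_lt_one hα hlt).mp hterm,
    fun hgt => (rpow_le_rpow_left_iff hgt).mp hterm⟩

/-- If the final potential `P_m ≤ 1` then `α_i^{Z_{m,i}} ≤ α_i^{λ_i m}`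
for every `i`, hence `Z_{m,i} ≥ λ_i m` when `α_i < 1` and `Z_{m,i} ≤ λ_i m` when `α_i > 1`. -/
theorem final_potential_conclusion
    (N : ℕ) (p lam Z : Fin N → ℝ) (m : ℕ) (hm : 0 < m)
    (hp0 : ∀ i, 0 < p i) (hp1 : ∀ i, p i < 1)
    (hlam0 : ∀ i, 0 < lam i) (hlam1 : ∀ i, lam i < 1)
    (hne : ∀ i, lam i ≠ p i) (hZ : ∀ i, 0 ≤ Z i)
    (hP : ∑ i : Fin N,
        Real.exp (-(lam i * Real.log (lam i / p i) +
          (1 - lam i) * Real.log ((1 - lam i) / (1 - p i))) * m) *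
        ((1 - lam i) / (1 - p i)) ^ (m : ℝ) *
        ((1 - p i) * lam i / (p i * (1 - lam i))) ^ (Z i) ≤ 1) :
    ∀ i : Fin N,
      ((1 - p i) * lam i / (p i * (1 - lam i))) ^ (Z i) ≤
        ((1 - p i) * lam i / (p i * (1 - lam i))) ^ (lam i * m) ∧
      ((1 - p i) * lam i / (p i * (1 - lam i)) < 1 → Z i ≥ lam i * m) ∧
      (1 < (1 - p i) * lam i / (p i * (1 - lam i)) → Z i ≤ lam i * m) :=
  final_potential_conclusion_general N p lam Z m hp0 hp1 hlam0 hlam1 hP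
end

section
/- Let S ⊆ {0,1}^n be a multiset, k < n, r < k even, and ε < 1/2^{k+1}. Suppose that for all distinct indices i_1 < ⋯ < i_k and all ξ ∈ {0,1}^k, |Pr_{x∼U_S}[(x_{i_1},…,x_{i_k}) = ξ] − 1/2^k| ≤ ε. Fix ξ ∈ {0,1}^{k-r} and let S_ξ = {s ∈ S : (s_1,…,s_{k-r}) = ξ}. Then for all distinct i_1,…,i_r ∈ {k-r+1,…,n} and all α ∈ {0,1}^r \ {0}, |Pr[α_1 x_{i_1} ⊕ ⋯ ⊕ α_r x_{i_r} = 1 | x ∈ S_ξ] − 1/2| ≤ 2^{k+1} ε. -/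
/-!
Sort the rows of `S_ξ` by the pattern `β ∈ (ZMod 2)ʳ` they show on the coordinates `ι`. Together
with `ξ` on the first `k - r` coordinates this is a pattern on `k` distinct coordinates, so every
class has frequency `2⁻ᵏ ± ε` in `S`. A nonzero parity `α` equals `1` on exactly half of the
`2ʳ` patterns, so the conditional probability is a ratio `(c 2⁻ᵏ ± c ε) / (2c 2⁻ᵏ ± 2c ε)`,
which is within `ε / (2⁻ᵏ - ε) ≤ 2ᵏ⁺¹ ε` of `1/2` as soon as `2 ε < 2⁻ᵏ`.
-/

open Finset Matrix

theorem card_mul_card_filter_dotProduct_eq {F ι : Type*} [Field F] [Fintype F] [DecidableEq F]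
    [Fintype ι] [DecidableEq ι] {α : ι → F} (hα : α ≠ 0) (c : F) :
    Fintype.card F * #{β : ι → F | α ⬝ᵥ β = c} = Fintype.card F ^ Fintype.card ι := by
  let f : (ι → F) →+ F := ⟨⟨(α ⬝ᵥ ·), dotProduct_zero α⟩, dotProduct_add α⟩
  obtain ⟨i, hi⟩ := Function.ne_iff.mp hα
  have hf : Function.Surjective f := fun d =>
    ⟨Pi.single i (d / α i), by simp [f, dotProduct_single, mul_div_cancel₀ _ hi]⟩
  calc Fintype.card F * #{β : ι → F | α ⬝ᵥ β = c}
      = ∑ d : F, #{β : ι → F | f β = d} := by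
        rw [sum_congr rfl fun d _ => AddMonoidHom.card_fiber_eq_of_mem_range f (hf d) (hf c)]
        simp [f]
    _ = Fintype.card F ^ Fintype.card ι := by
        rw [← card_eq_sum_card_fiberwise fun _ _ => mem_univ _, card_univ, Fintype.card_fun]

theorem abs_sum_sub_card_mul_le {γ : Type*} (s : Finset γ) (p : γ → ℝ) {δ ε : ℝ}
    (hp : ∀ β, |p β - δ| ≤ ε) : |∑ β ∈ s, p β - #s * δ| ≤ #s * ε := by
  calc |∑ β ∈ s, p β - #s * δ| = |∑ β ∈ s, (p β - δ)| := by simp [sum_sub_distrib]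
    _ ≤ ∑ β ∈ s, |p β - δ| := abs_sum_le_sum_abs _ _
    _ ≤ #s * ε := by simpa using sum_le_card_nsmul s _ ε fun β _ => hp β

theorem abs_sum_div_sum_sub_half_le {γ : Type*} [Fintype γ] [Nonempty γ] (p : γ → ℝ)
    (Q : Finset γ) (hQ : Fintype.card γ = 2 * #Q) {δ ε : ℝ} (hp : ∀ β, |p β - δ| ≤ ε)
    (hεδ : 2 * ε < δ) :
    |(∑ β ∈ Q, p β) / (∑ β, p β) - 1 / 2| ≤ 2 * ε / δ := by
  have hQ' : (#(univ : Finset γ) : ℝ) = 2 * #Q := by rw [card_univ, hQ]; push_cast; ring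
  have hc : (0 : ℝ) < #Q := by
    have := Fintype.card_pos (α := γ)
    exact_mod_cast (by omega : 0 < #Q)
  have hε : 0 ≤ ε := (abs_nonneg _).trans (hp (Classical.arbitrary γ))
  have hhalf := abs_sum_sub_card_mul_le Q p hp
  have hall := abs_sum_sub_card_mul_le univ p hp
  rw [hQ'] at hall
  have hb : 2 * #Q * (δ - ε) ≤ ∑ β, p β := by linarith [(abs_le.mp hall).1]
  have hbpos : 0 < ∑ β, p β := lt_of_lt_of_le (by nlinarith) hb
  have hdiff : |∑ β ∈ Q, p β - (∑ β, p β) / 2| ≤ 2 * #Q * ε := by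
    rw [abs_le] at hhalf hall ⊢
    constructor <;> linarith [hhalf.1, hhalf.2, hall.1, hall.2]
  have hδ : 0 < δ := by linarith
  rw [show (∑ β ∈ Q, p β) / (∑ β, p β) - 1 / 2 = (∑ β ∈ Q, p β - (∑ β, p β) / 2) / ∑ β, p β by
    field_simp, abs_div, abs_of_pos hbpos, div_le_iff₀ hbpos]
  calc |∑ β ∈ Q, p β - (∑ β, p β) / 2| ≤ 2 * #Q * ε := hdiff
    _ ≤ 2 * ε / δ * (2 * #Q * (δ - ε)) := by
        rw [div_mul_eq_mul_div, le_div_iff₀ hδ]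
        nlinarith [mul_nonneg hc.le hε]
    _ ≤ 2 * ε / δ * ∑ β, p β := by gcongr

theorem abs_card_filter_mem_div_card_sub_half_le {Ω γ : Type*} [Fintype γ] [Nonempty γ]
    [DecidableEq γ] (S : Finset Ω) (g : Ω → γ) (Q : Finset γ) (hQ : Fintype.card γ = 2 * #Q)
    {m δ ε : ℝ} (hm : m ≠ 0) (hg : ∀ β, |#{j ∈ S | g j = β} / m - δ| ≤ ε) (hεδ : 2 * ε < δ) :
    |(#{j ∈ S | g j ∈ Q} : ℝ) / #S - 1 / 2| ≤ 2 * ε / δ := by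
  have hS : (#S : ℝ) = ∑ β, (#{j ∈ S | g j = β} : ℝ) := by
    exact_mod_cast card_eq_sum_card_fiberwise fun _ _ => mem_univ _
  have h := abs_sum_div_sum_sub_half_le _ Q hQ hg hεδ
  rwa [← sum_div, ← sum_div, div_div_div_cancel_right₀ hm, ← hS,
    ← Nat.cast_sum, sum_card_fiberwise_eq_card_filter] at h

/-- The rows `x j` of the sample, a multiset in `(ZMod 2)ⁿ`, are `ε`-almost `k`-wise independent
in `L∞`. -/
def IsAlmostKWiseIndependent {m n : ℕ} (x : Fin m → Fin n → ZMod 2) (k : ℕ) (ε : ℝ) : Prop :=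
  ∀ ι : Fin k → Fin n, Function.Injective ι → ∀ ξ : Fin k → ZMod 2,
    |(#{j | ∀ t, x j (ι t) = ξ t} : ℝ) / m - 1 / 2 ^ k| ≤ ε

theorem IsAlmostKWiseIndependent.abs_card_filter_div_sub_le {m n k : ℕ}
    {x : Fin m → Fin n → ZMod 2} {ε : ℝ} (hx : IsAlmostKWiseIndependent x k ε)
    {κ : Type*} [Fintype κ] (hκ : Fintype.card κ = k) {f : κ → Fin n}
    (hf : Function.Injective f) (ζ : κ → ZMod 2) :
    |(#{j | ∀ s, x j (f s) = ζ s} : ℝ) / m - 1 / 2 ^ k| ≤ ε := by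
  let σ : Fin k ≃ κ := (Fintype.equivFinOfCardEq hκ).symm
  simpa only [σ.forall_congr_left, Function.comp_apply, Equiv.apply_symm_apply] using
    hx (f ∘ σ) (hf.comp σ.injective) (ζ ∘ σ)

/-- If `S` is `ε`-almost `k`-wise independent in `L∞` with `ε < 1/2^{k+1}`,
then conditioned on the first `k-r` coordinates equalling `ξ`, every nonzero parity on
`r` distinct indices among `{k-r,…,n-1}` has bias at most `2^{k+1} ε`. -/
theorem conditional_parity_bias (n m k r : ℕ) (hk : k < n) (hr : r < k)
    (ε : ℝ) (hε : ε < 1 / 2 ^ (k + 1))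
    (x : Fin m → Fin n → ZMod 2)
    (hyp : ∀ ι : Fin k → Fin n, Function.Injective ι →
      ∀ ξ : Fin k → ZMod 2,
        |((Finset.univ.filter (fun j : Fin m => ∀ t, x j (ι t) = ξ t)).card : ℝ) / m
          - 1 / 2 ^ k| ≤ ε)
    (ξ : Fin (k - r) → ZMod 2)
    (hne : 0 < (Finset.univ.filter (fun j : Fin m =>
      ∀ i : Fin (k - r), x j (⟨i.val, by omega⟩ : Fin n) = ξ i)).card) :
    ∀ ι : Fin r → Fin n, Function.Injective ι → (∀ t, k - r ≤ (ι t).val) →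
      ∀ α : Fin r → ZMod 2, α ≠ 0 →
        |((Finset.univ.filter (fun j : Fin m =>
              (∀ i : Fin (k - r), x j (⟨i.val, by omega⟩ : Fin n) = ξ i) ∧
              (∑ t, α t * x j (ι t)) = 1)).card : ℝ) /
            ((Finset.univ.filter (fun j : Fin m =>
              ∀ i : Fin (k - r), x j (⟨i.val, by omega⟩ : Fin n) = ξ i)).card : ℝ)
          - 1 / 2| ≤ 2 ^ (k + 1) * ε := by
  intro ι hι hιge α hα
  let e : Fin (k - r) → Fin n := fun i => ⟨i.val, by omega⟩
  have hm : (m : ℝ) ≠ 0 := Nat.cast_ne_zero.mpr (by rintro rfl; simp at hne)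
  have hQ : Fintype.card (Fin r → ZMod 2) = 2 * #{β : Fin r → ZMod 2 | α ⬝ᵥ β = 1} := by
    simpa using (card_mul_card_filter_dotProduct_eq hα 1).symm
  have hfiber : ∀ β : Fin r → ZMod 2, |(#{j ∈ {j | ∀ i, x j (e i) = ξ i} |
      (fun t => x j (ι t)) = β} : ℝ) / m - 1 / 2 ^ k| ≤ ε := by
    intro β
    have he : Function.Injective e := fun a b h => Fin.ext (by simpa [e] using congrArg Fin.val h)
    have hdisj : ∀ i t, e i ≠ ι t := fun i t h => by
      have := hιge t; rw [← h] at this; exact absurd i.isLt (not_lt.mpr this)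
    convert IsAlmostKWiseIndependent.abs_card_filter_div_sub_le hyp (by simp; omega)
      (he.sumElim hι hdisj) (Sum.elim ξ β) using 4
    congr 2; ext j; simp [Sum.forall, funext_iff]
  have hεk : 2 * ε < 1 / 2 ^ k := by
    rw [pow_succ] at hε; rw [lt_div_iff₀ (by positivity)] at hε ⊢; linarith
  have h := abs_card_filter_mem_div_card_sub_half_le _ _ _ hQ hm hfiber hεk
  convert h using 4
  · congr 2; ext j; simp only [e, mem_filter, mem_univ, true_and]; rfl
  · field_simp; ring
end

section
/- Let H ⊆ [q]^n be a multiset such that for every k distinct indices i_1 < ⋯ < i_k, Pr_{u∼U_H}[u_{i_1},…,u_{i_k} pairwise distinct] ≥ 1 − ε/4, and let R ⊆ {0,1}^q be a multiset such that for every k distinct indices j_1 < ⋯ < j_k and every ξ ∈ {0,1}^k, |Pr_{v∼U_R}[(v_{j_1},…,v_{j_k}) = ξ] − 1/2^k| ≤ ε/4. Define the multiset S = {(v_{u_1},…,v_{u_n}) : u ∈ H, v ∈ R} (with multiplicity, so |S| = |H|·|R|). Then for every k distinct indices i_1 < ⋯ < i_k and every ξ ∈ {0,1}^k, |Pr_{s∼U_S}[(s_{i_1},…,s_{i_k})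 = ξ] − 1/2^k| ≤ ε. -/
/-! Condition on `u ∈ H`. For the `u` that are injective on the chosen `k` coordinates, which make
up a `(1 - ε/4)`-fraction of `H`, the pattern `(v (u i₁), …, v (u i_k))` is read off `v` at `k`
distinct coordinates, so its probability is within `ε/4` of `2⁻ᵏ`; for the other `u` it is off
by at most `1`. Averaging over `u` gives a deviation of at most `ε/4 + ε/4 ≤ ε`. -/

open Finset

section Averaging

variable {α : Type*}

theorem abs_sum_le_of_abs_le_on_filter {s : Finset α} {f : α → ℝ} {P : α → Prop}
    [DecidablePred P] {δ B : ℝ} (hgood : ∀ a ∈ s, P a → |f a| ≤ δ) (hbad : ∀ a ∈ s, |f a| ≤ B) :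
    |∑ a ∈ s, f a| ≤ #{a ∈ s | P a} * δ + #{a ∈ s | ¬P a} * B := by
  calc |∑ a ∈ s, f a| ≤ ∑ a ∈ s, |f a| := abs_sum_le_sum_abs _ _
    _ = ∑ a ∈ s with P a, |f a| + ∑ a ∈ s with ¬P a, |f a| :=
      (sum_filter_add_sum_filter_not _ _ _).symm
    _ ≤ #{a ∈ s | P a} • δ + #{a ∈ s | ¬P a} • B := by
      gcongr
      · exact sum_le_card_nsmul _ _ _ fun a ha => hgood a (mem_filter.1 ha).1 (mem_filter.1 ha).2
      · exact sum_le_card_nsmul _ _ _ fun a ha => hbad a (mem_filter.1 ha).1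
    _ = _ := by simp only [nsmul_eq_mul]

theorem abs_sum_div_card_sub_le {s : Finset α} (hs : s.Nonempty) {p : α → ℝ} {c δ : ℝ}
    (P : α → Prop) [DecidablePred P] (hδ : 0 ≤ δ)
    (hp : ∀ a ∈ s, p a ∈ Set.Icc 0 1) (hc : c ∈ Set.Icc 0 1)
    (hgood : ∀ a ∈ s, P a → |p a - c| ≤ δ) (hdense : 1 - δ ≤ #{a ∈ s | P a} / #s) :
    |(∑ a ∈ s, p a) / #s - c| ≤ 2 * δ := by
  have hs' : (0 : ℝ) < #s := by exact_mod_cast hs.card_pos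
  have hcard : (#{a ∈ s | P a} : ℝ) + #{a ∈ s | ¬P a} = #s := by
    exact_mod_cast card_filter_add_card_filter_not P
  have hsum : |∑ a ∈ s, (p a - c)| ≤ #{a ∈ s | P a} * δ + #{a ∈ s | ¬P a} * 1 :=
    abs_sum_le_of_abs_le_on_filter hgood fun a ha =>
      abs_sub_le_of_nonneg_of_le (hp a ha).1 (hp a ha).2 hc.1 hc.2
  rw [le_div_iff₀ hs'] at hdense
  have hgood_le : (#{a ∈ s | P a} : ℝ) ≤ #s := by exact_mod_cast card_filter_le s P
  rw [sum_sub_distrib, sum_const, nsmul_eq_mul] at hsum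
  rw [div_sub' hs'.ne', abs_div, abs_of_pos hs', div_le_iff₀ hs']
  refine hsum.trans ?_
  linarith [mul_le_mul_of_nonneg_right hgood_le hδ]

end Averaging

theorem card_filter_prod_div_eq {α β : Type*} [Fintype α] [Fintype β] (Q : α → β → Prop)
    [∀ a, DecidablePred (Q a)] :
    (#{ab : α × β | Q ab.1 ab.2} : ℝ) / (Fintype.card α * Fintype.card β) =
      (∑ a, (#{b | Q a b} : ℝ) / Fintype.card β) / Fintype.card α := by
  have hfiber : #{ab : α × β | Q ab.1 ab.2} = ∑ a, #{b | Q a b} := by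
    simp only [card_filter, Fintype.sum_prod_type]
  rw [hfiber, Nat.cast_sum, ← sum_div, div_div, mul_comm (Fintype.card α : ℝ)]

theorem card_filter_div_mem_Icc {α : Type*} [Fintype α] (P : α → Prop) [DecidablePred P] :
    (#{a | P a} : ℝ) / Fintype.card α ∈ Set.Icc 0 1 :=
  ⟨by positivity, div_le_one_of_le₀ (by exact_mod_cast card_le_univ _) (Nat.cast_nonneg _)⟩

theorem compose_phf_kwise_linf_general (n q k M L : ℕ) (hM : 0 < M)
    (ε : ℝ) (hε : 0 ≤ ε)
    (H : Fin M → Fin n → Fin q) (R : Fin L → Fin q → ZMod 2)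
    (hH : ∀ ι : Fin k → Fin n, Function.Injective ι →
      ((Finset.univ.filter (fun a : Fin M =>
        Function.Injective (fun t : Fin k => H a (ι t)))).card : ℝ) / M ≥ 1 - ε / 4)
    (hR : ∀ κ : Fin k → Fin q, Function.Injective κ → ∀ ξ : Fin k → ZMod 2,
      |((Finset.univ.filter (fun b : Fin L => ∀ t, R b (κ t) = ξ t)).card : ℝ) / L
        - 1 / 2 ^ k| ≤ ε / 4) :
    ∀ ι : Fin k → Fin n, Function.Injective ι → ∀ ξ : Fin k → ZMod 2,
      |((Finset.univ.filter (fun ab : Fin M × Fin L =>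
          ∀ t, R ab.2 (H ab.1 (ι t)) = ξ t)).card : ℝ) / (M * L)
        - 1 / 2 ^ k| ≤ ε := by
  intro ι hι ξ
  have hcount := card_filter_prod_div_eq fun (a : Fin M) (b : Fin L) => ∀ t, R b (H a (ι t)) = ξ t
  simp only [Fintype.card_fin] at hcount
  have hfrac (a : Fin M) :
      (#{b | ∀ t, R b (H a (ι t)) = ξ t} : ℝ) / L ∈ Set.Icc 0 1 := by
    simpa using card_filter_div_mem_Icc (α := Fin L) _
  have hc : (1 / 2 ^ k : ℝ) ∈ Set.Icc 0 1 :=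
    ⟨by positivity, div_le_one_of_le₀ (one_le_pow₀ (by norm_num)) (by positivity)⟩
  have havg := abs_sum_div_card_sub_le (s := univ) (univ_nonempty_iff.2 ⟨⟨0, hM⟩⟩)
    (fun a : Fin M => Function.Injective fun t => H a (ι t)) (by positivity)
    (fun a _ => hfrac a) hc (fun a _ ha => hR _ ha ξ) (by simpa using hH ι hι)
  rw [hcount]
  simp only [card_univ, Fintype.card_fin] at havg
  linarith

/-- Composing a `(1-ε/4)`-dense `(n,q,k)`-perfect hash family `H` with an
`(ε/4)`-almost `k`-wise independent (in `L∞`) set `R ⊆ {0,1}^q` yields the multiset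
`S = {v∘u : u ∈ H, v ∈ R}` which is `ε`-almost `k`-wise independent in `L∞`. -/
theorem compose_phf_kwise_linf (n q k M L : ℕ) (hM : 0 < M) (hL : 0 < L)
    (ε : ℝ) (hε : 0 ≤ ε)
    (H : Fin M → Fin n → Fin q) (R : Fin L → Fin q → ZMod 2)
    (hH : ∀ ι : Fin k → Fin n, Function.Injective ι →
      ((Finset.univ.filter (fun a : Fin M =>
        Function.Injective (fun t : Fin k => H a (ι t)))).card : ℝ) / M ≥ 1 - ε / 4)
    (hR : ∀ κ : Fin k → Fin q, Function.Injective κ → ∀ ξ : Fin k → ZMod 2,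
      |((Finset.univ.filter (fun b : Fin L => ∀ t, R b (κ t) = ξ t)).card : ℝ) / L
        - 1 / 2 ^ k| ≤ ε / 4) :
    ∀ ι : Fin k → Fin n, Function.Injective ι → ∀ ξ : Fin k → ZMod 2,
      |((Finset.univ.filter (fun ab : Fin M × Fin L =>
          ∀ t, R ab.2 (H ab.1 (ι t)) = ξ t)).card : ℝ) / (M * L)
        - 1 / 2 ^ k| ≤ ε :=
  compose_phf_kwise_linf_general n q k M L hM ε hε H R hH hR
end

section
/- Let S = {s^{(1)},…,s^{(m)}} be a multiset in {0,1}^n and r < n an even number. Suppose for every r distinct indices i_1,…,i_r and every nonzero α ∈ {0,1}^r, 1/2 − ε ≤ Pr_{s∼U_S}[α_1 s_{i_1} ⊕ ⋯ ⊕ α_r s_{i_r} = 1] ≤ 1/2 + ε. For each choice of r/2 distinct indices i ∈ I and nonzero β ∈ {0,1}^{r/2}, define the vector c_{i,β} = (β·s^{(1)}_i, …, β·s^{(m)}_i) ∈ {0,1}^m. Then any two distinct such vectors c, c' have Hamming distance in [(1/2 − ε)m, (1/2 + ε)m]. -/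
/-! In `ZMod 2`, `a ≠ b ↔ a - b = 1`, so the Hamming distance between `c_{i,β}` and `c_{i',β'}`
counts the samples on which the parity `β·s_i - β'·s_{i'}` equals `1`. This difference is a parity
whose coefficient vector is nonzero (the two parities differ) and supported on at most `r`
coordinates; padding the support to exactly `r` distinct coordinates, the hypothesis applies. -/

open Finset

lemma ZMod.two_ne_iff_sub_eq_one (a b : ZMod 2) : a ≠ b ↔ a - b = 1 := by
  revert a b; decide

lemma Finset.exists_injective_fin_subset_range {α : Type*} [Fintype α] (s : Finset α) {r : ℕ}
    (hs : #s ≤ r) (hr : r ≤ Fintype.card α) :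
    ∃ ι : Fin r → α, Function.Injective ι ∧ ∀ x ∈ s, x ∈ Set.range ι := by
  obtain ⟨T, hsT, -, hT⟩ := exists_subsuperset_card_eq (subset_univ s) hs (by simpa using hr)
  let e := T.equivFinOfCardEq hT
  exact ⟨fun t => e.symm t, Subtype.val_injective.comp e.symm.injective,
    fun x hx => ⟨e ⟨x, hsT hx⟩, by simp⟩⟩

variable {R κ n : Type*}

lemma sum_single_dotProduct [NonUnitalNonAssocSemiring R] [Fintype κ] [Fintype n]
    [DecidableEq n] (g : κ → n) (γ : κ → R) (y : n → R) :
    (∑ t, Pi.single (g t) (γ t)) ⬝ᵥ y = ∑ t, γ t * y (g t) := by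
  simp only [sum_dotProduct, single_dotProduct]

lemma sum_single_apply_of_notMem_range [AddCommMonoid R] [Fintype κ] [DecidableEq n]
    {g : κ → n} (γ : κ → R) {x : n} (hx : x ∉ Set.range g) :
    (∑ t, Pi.single (g t) (γ t) : n → R) x = 0 := by
  refine (Finset.sum_apply x _ _).trans (sum_eq_zero fun t _ => ?_)
  exact Pi.single_eq_of_ne (fun h => hx ⟨t, h.symm⟩) _

lemma sum_mul_comp_eq_dotProduct [NonUnitalNonAssocSemiring R] [Fintype κ] [Fintype n]
    {ι : κ → n} (hι : Function.Injective ι) {c : n → R}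
    (hc : ∀ x, c x ≠ 0 → x ∈ Set.range ι) (y : n → R) :
    ∑ t, c (ι t) * y (ι t) = c ⬝ᵥ y :=
  Fintype.sum_of_injective ι hι _ _
    (fun x hx => by rw [not_imp_comm.1 (hc x) hx, zero_mul]) fun _ => rfl

theorem exists_parity_eq_sub [Ring R] [Fintype κ] [Fintype n] [DecidableEq n]
    {κ' : Type*} [Fintype κ'] {r : ℕ}
    (hr : Fintype.card κ + Fintype.card κ' ≤ r) (hrn : r ≤ Fintype.card n)
    (i : κ → n) (i' : κ' → n) (β : κ → R) (β' : κ' → R)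
    (hne : (fun y : n → R => ∑ t, β t * y (i t)) ≠ (fun y => ∑ t, β' t * y (i' t))) :
    ∃ ι : Fin r → n, Function.Injective ι ∧ ∃ α : Fin r → R, α ≠ 0 ∧
      ∀ y : n → R, ∑ t, α t * y (ι t) = ∑ t, β t * y (i t) - ∑ t, β' t * y (i' t) := by
  set c : n → R := ∑ t, Pi.single (i t) (β t) - ∑ t, Pi.single (i' t) (β' t)
  have hc_dot (y : n → R) : c ⬝ᵥ y = ∑ t, β t * y (i t) - ∑ t, β' t * y (i' t) := by
    rw [sub_dotProduct, sum_single_dotProduct, sum_single_dotProduct]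
  have hc_supp : ∀ x, c x ≠ 0 → x ∈ image i univ ∪ image i' univ := by
    intro x hx
    by_contra h
    simp only [mem_union, mem_image, mem_univ, true_and, not_or] at h
    apply hx
    simp only [c, Pi.sub_apply]
    rw [sum_single_apply_of_notMem_range _ h.1, sum_single_apply_of_notMem_range _ h.2, sub_zero]
  have h_card : #(image i univ ∪ image i' univ) ≤ r := calc
    _ ≤ #(image i univ) + #(image i' univ) := card_union_le _ _
    _ ≤ r := le_trans (add_le_add card_image_le card_image_le) (by simpa using hr)
  obtain ⟨ι, hι, h_range⟩ := exists_injective_fin_subset_range _ h_card hrn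
  have hc_range : ∀ x, c x ≠ 0 → x ∈ Set.range ι := fun x hx => h_range x (hc_supp x hx)
  refine ⟨ι, hι, c ∘ ι, ?_, fun y => (sum_mul_comp_eq_dotProduct hι hc_range y).trans (hc_dot y)⟩
  intro hcι
  refine hne (funext fun y => sub_eq_zero.1 ?_)
  rw [← hc_dot, ← sum_mul_comp_eq_dotProduct hι hc_range]
  simp [show ∀ t, c (ι t) = 0 from congrFun hcι]

theorem code_from_parities_general (n m r : ℕ) (hm : 0 < m) (hr : r < n)
    (ε : ℝ) (s : Fin m → Fin n → ZMod 2)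
    (hyp : ∀ ι : Fin r → Fin n, Function.Injective ι →
      ∀ α : Fin r → ZMod 2, α ≠ 0 →
        (1 / 2 - ε) ≤ ((Finset.univ.filter (fun j : Fin m =>
            (∑ t, α t * s j (ι t)) = 1)).card : ℝ) / m ∧
        ((Finset.univ.filter (fun j : Fin m =>
            (∑ t, α t * s j (ι t)) = 1)).card : ℝ) / m ≤ (1 / 2 + ε)) :
    ∀ (i i' : Fin (r / 2) → Fin n), Function.Injective i → Function.Injective i' →
    ∀ (β β' : Fin (r / 2) → ZMod 2), β ≠ 0 → β' ≠ 0 →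
      (fun y : Fin n → ZMod 2 => ∑ t, β t * y (i t)) ≠
        (fun y : Fin n → ZMod 2 => ∑ t, β' t * y (i' t)) →
      (1 / 2 - ε) * m ≤ ((Finset.univ.filter (fun j : Fin m =>
          (∑ t, β t * s j (i t)) ≠ (∑ t, β' t * s j (i' t)))).card : ℝ) ∧
      ((Finset.univ.filter (fun j : Fin m =>
          (∑ t, β t * s j (i t)) ≠ (∑ t, β' t * s j (i' t)))).card : ℝ) ≤ (1 / 2 + ε) * m := by
  intro i i' _ _ β β' _ _ hne
  obtain ⟨ι, hι, α, hα, hαβ⟩ :=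
    exists_parity_eq_sub (r := r) (by simp only [Fintype.card_fin]; omega) (by simpa using hr.le)
      i i' β β' hne
  have hdist : univ.filter (fun j => ∑ t, β t * s j (i t) ≠ ∑ t, β' t * s j (i' t)) =
      univ.filter (fun j => ∑ t, α t * s j (ι t) = 1) :=
    filter_congr fun j _ => by rw [ZMod.two_ne_iff_sub_eq_one, hαβ]
  have hm' : (0 : ℝ) < m := by exact_mod_cast hm
  obtain ⟨hlow, hup⟩ := hyp ι hι α hα
  rw [hdist]
  exact ⟨(le_div_iff₀ hm').1 hlow, (div_le_iff₀ hm').1 hup⟩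

/-- If every nonzero parity on `r` distinct indices of the multiset `S`
has probability of being `1` in `[1/2-ε, 1/2+ε]`, then the vectors
`c_{i,β} = (β·s^{(1)}_i,…,β·s^{(m)}_i)` (for `r/2` distinct indices `i` and nonzero `β`)
that come from distinct parities have pairwise Hamming distance in `[(1/2-ε)m, (1/2+ε)m]`. -/
theorem code_from_parities (n m r : ℕ) (hm : 0 < m) (hr : r < n) (hrE : Even r)
    (ε : ℝ) (s : Fin m → Fin n → ZMod 2)
    (hyp : ∀ ι : Fin r → Fin n, Function.Injective ι →
      ∀ α : Fin r → ZMod 2, α ≠ 0 →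
        (1 / 2 - ε) ≤ ((Finset.univ.filter (fun j : Fin m =>
            (∑ t, α t * s j (ι t)) = 1)).card : ℝ) / m ∧
        ((Finset.univ.filter (fun j : Fin m =>
            (∑ t, α t * s j (ι t)) = 1)).card : ℝ) / m ≤ (1 / 2 + ε)) :
    ∀ (i i' : Fin (r / 2) → Fin n), Function.Injective i → Function.Injective i' →
    ∀ (β β' : Fin (r / 2) → ZMod 2), β ≠ 0 → β' ≠ 0 →
      (fun y : Fin n → ZMod 2 => ∑ t, β t * y (i t)) ≠
        (fun y : Fin n → ZMod 2 => ∑ t, β' t * y (i' t)) →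
      (1 / 2 - ε) * m ≤ ((Finset.univ.filter (fun j : Fin m =>
          (∑ t, β t * s j (i t)) ≠ (∑ t, β' t * s j (i' t)))).card : ℝ) ∧
      ((Finset.univ.filter (fun j : Fin m =>
          (∑ t, β t * s j (i t)) ≠ (∑ t, β' t * s j (i' t)))).card : ℝ) ≤ (1 / 2 + ε) * m :=
  code_from_parities_general n m r hm hr ε s hyp
end

section
/- Let H ⊆ [q]^n satisfy: for every k distinct indices, Pr_{u∼U_H}[u_{i_1},…,u_{i_k} pairwise distinct] ≥ 1 − ε/4. Let R ⊆ {0,1}^q satisfy: for every k distinct indices j_1 < ⋯ < j_k, Σ_{ξ∈{0,1}^k}|Pr_{v∼U_R}[(v_{j_1},…,v_{j_k}) = ξ] − 1/2^k| ≤ ε/4 (ε/4-almost k-wise independent in L1-norm). Then the multiset S = {(v_{u_1},…,v_{u_n}) : u ∈ H, v ∈ R} satisfies: for every k distinct indices i_1 < ⋯ < i_k and every Boolean function f : {0,1}^k → {0,1}, Pr_{s∼U_S}[f(s_{i_1},…,s_{i_k}) = 1] ≤ Pr_{ξ∼U_{{0,1}^k}}[f(ξ) = 1] + ε/2. -/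
/-! Fix the `k` coordinates `ι`. For a hash `a` injective on `ι` the positions `H a (ι t)` are
distinct, so the `k` bits of `R` read there are `ε/4`-close to uniform in `L1`, and the event
`f = 1` gains at most `ε/4` over its uniform probability. The other hashes form at most an `ε/4`
fraction of `H` and each contributes probability at most `1`. -/

open Finset

section
variable {β γ : Type*} [Fintype β] [Fintype γ] [DecidableEq γ]

theorem card_filter_comp_eq_sum_card_fiber (g : β → γ) (P : γ → Prop) [DecidablePred P] :
    #{b | P (g b)} = ∑ ξ with P ξ, #{b | g b = ξ} := by
  rw [card_eq_sum_card_fiberwise (t := {ξ | P ξ}) fun b hb => by simpa using hb]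
  refine sum_congr rfl fun ξ hξ => congrArg card ?_
  ext b
  simp only [mem_filter, mem_univ, true_and] at hξ ⊢
  exact ⟨And.right, fun h => ⟨h ▸ hξ, h⟩⟩

theorem card_filter_comp_div_le_of_sum_abs_le (g : β → γ) (P : γ → Prop) [DecidablePred P]
    {c δ : ℝ} (hg : ∑ ξ, |(#{b | g b = ξ} : ℝ) / Fintype.card β - c| ≤ δ) :
    (#{b | P (g b)} : ℝ) / Fintype.card β ≤ #{ξ | P ξ} * c + δ := by
  set p : γ → ℝ := fun ξ => (#{b | g b = ξ} : ℝ) / Fintype.card β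
  calc (#{b | P (g b)} : ℝ) / Fintype.card β = ∑ ξ with P ξ, p ξ := by
        rw [card_filter_comp_eq_sum_card_fiber, Nat.cast_sum, sum_div]
    _ ≤ ∑ ξ with P ξ, (c + |p ξ - c|) :=
        sum_le_sum fun ξ _ => by linarith [le_abs_self (p ξ - c)]
    _ = #{ξ | P ξ} * c + ∑ ξ with P ξ, |p ξ - c| := by
        rw [sum_add_distrib, sum_const, nsmul_eq_mul]
    _ ≤ #{ξ | P ξ} * c + δ := by
        gcongr
        exact (sum_le_sum_of_subset_of_nonneg (filter_subset _ _)
          fun _ _ _ => abs_nonneg _).trans hg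
end

theorem card_filter_prod_div_le_add_of_dense {α β : Type*} [Fintype α] [Nonempty α] [Fintype β]
    (Q : α → β → Prop) [∀ a, DecidablePred (Q a)] (G : α → Prop) [DecidablePred G]
    {c δ : ℝ} (hc : 0 ≤ c)
    (hgood : ∀ a, G a → (#{b | Q a b} : ℝ) / Fintype.card β ≤ c)
    (hdense : 1 - δ ≤ (#{a | G a} : ℝ) / Fintype.card α) :
    (#{p : α × β | Q p.1 p.2} : ℝ) / (Fintype.card α * Fintype.card β) ≤ c + δ := by
  set p : α → ℝ := fun a => (#{b | Q a b} : ℝ) / Fintype.card β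
  have hα : (0 : ℝ) < Fintype.card α := by exact_mod_cast Fintype.card_pos
  have hsplit : (#{a | G a} : ℝ) + #{a | ¬ G a} = Fintype.card α := by
    exact_mod_cast card_filter_add_card_filter_not (s := univ) G
  have hp_le_one : ∀ a, p a ≤ 1 := fun a =>
    div_le_one_of_le₀ (by exact_mod_cast card_le_univ _) (Nat.cast_nonneg _)
  have hsum : ∑ a, p a ≤ #{a | G a} * c + #{a | ¬ G a} := by
    rw [← sum_filter_add_sum_filter_not univ G]
    gcongr
    · exact (sum_le_sum fun a ha => hgood a (mem_filter.1 ha).2).trans_eq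
        (by rw [sum_const, nsmul_eq_mul])
    · exact (sum_le_sum fun a _ => hp_le_one a).trans_eq (by simp)
  have hcount : #{p : α × β | Q p.1 p.2} = ∑ a, #{b | Q a b} := by
    simp only [card_filter, Fintype.sum_prod_type]
  have hG_le : (#{a | G a} : ℝ) / Fintype.card α ≤ 1 :=
    div_le_one_of_le₀ (by exact_mod_cast card_le_univ _) (Nat.cast_nonneg _)
  calc (#{p : α × β | Q p.1 p.2} : ℝ) / (Fintype.card α * Fintype.card β)
      = (∑ a, p a) / Fintype.card α := by
        rw [hcount, Nat.cast_sum, mul_comm, ← div_div, sum_div]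
    _ ≤ (#{a | G a} * c + #{a | ¬ G a}) / Fintype.card α := by gcongr
    _ = #{a | G a} / Fintype.card α * c + (1 - #{a | G a} / Fintype.card α) := by
        field_simp
        linarith
    _ ≤ c + δ := by nlinarith

theorem compose_phf_kwise_l1_general (n q k M L : ℕ) (hM : 0 < M)
    (ε : ℝ) (hε : 0 ≤ ε)
    (H : Fin M → Fin n → Fin q) (R : Fin L → Fin q → ZMod 2)
    (hH : ∀ ι : Fin k → Fin n, Function.Injective ι →
      ((Finset.univ.filter (fun a : Fin M =>
        Function.Injective (fun t : Fin k => H a (ι t)))).card : ℝ) / M ≥ 1 - ε / 4)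
    (hR : ∀ κ : Fin k → Fin q, Function.Injective κ →
      ∑ ξ : Fin k → ZMod 2,
        |((Finset.univ.filter (fun b : Fin L => ∀ t, R b (κ t) = ξ t)).card : ℝ) / L
          - 1 / 2 ^ k| ≤ ε / 4) :
    ∀ ι : Fin k → Fin n, Function.Injective ι →
      ∀ f : (Fin k → ZMod 2) → Bool,
        ((Finset.univ.filter (fun ab : Fin M × Fin L =>
            f (fun t => R ab.2 (H ab.1 (ι t))) = true)).card : ℝ) / (M * L) ≤
          ((Finset.univ.filter (fun ξ : Fin k → ZMod 2 => f ξ = true)).card : ℝ) / 2 ^ k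
            + ε / 2 := by
  intro ι hι f
  have : Nonempty (Fin M) := Fin.pos_iff_nonempty.1 hM
  have hgood : ∀ a, Function.Injective (fun t => H a (ι t)) →
      (#{b | f (fun t => R b (H a (ι t))) = true} : ℝ) / Fintype.card (Fin L) ≤
        #{ξ | f ξ = true} * (1 / 2 ^ k) + ε / 4 := fun a ha =>
    card_filter_comp_div_le_of_sum_abs_le (fun b t => R b (H a (ι t))) (fun ξ => f ξ = true)
      (by simpa only [Fintype.card_fin, funext_iff] using hR _ ha)
  have hmix := card_filter_prod_div_le_add_of_dense (fun a b => f (fun t => R b (H a (ι t))) = true) _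
    (by positivity) hgood (by simpa only [Fintype.card_fin, ge_iff_le] using hH ι hι)
  simp only [Fintype.card_fin] at hmix
  linarith [show (#{ξ | f ξ = true} : ℝ) * (1 / 2 ^ k) = #{ξ | f ξ = true} / 2 ^ k by ring]

/-- Composing a `(1-ε/4)`-dense `(n,q,k)`-perfect hash family `H` with an
`(ε/4)`-almost `k`-wise independent (in `L1`) set `R ⊆ {0,1}^q` yields a multiset `S`
such that for every `k` distinct indices and every Boolean function `f` on `{0,1}^k`,
`Pr_{s∼U_S}[f(s_{i_1},…,s_{i_k}) = 1] ≤ Pr_{ξ uniform}[f(ξ) = 1] + ε/2`. -/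
theorem compose_phf_kwise_l1 (n q k M L : ℕ) (hM : 0 < M) (hL : 0 < L)
    (ε : ℝ) (hε : 0 ≤ ε)
    (H : Fin M → Fin n → Fin q) (R : Fin L → Fin q → ZMod 2)
    (hH : ∀ ι : Fin k → Fin n, Function.Injective ι →
      ((Finset.univ.filter (fun a : Fin M =>
        Function.Injective (fun t : Fin k => H a (ι t)))).card : ℝ) / M ≥ 1 - ε / 4)
    (hR : ∀ κ : Fin k → Fin q, Function.Injective κ →
      ∑ ξ : Fin k → ZMod 2,
        |((Finset.univ.filter (fun b : Fin L => ∀ t, R b (κ t) = ξ t)).card : ℝ) / L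
          - 1 / 2 ^ k| ≤ ε / 4) :
    ∀ ι : Fin k → Fin n, Function.Injective ι →
      ∀ f : (Fin k → ZMod 2) → Bool,
        ((Finset.univ.filter (fun ab : Fin M × Fin L =>
            f (fun t => R ab.2 (H ab.1 (ι t))) = true)).card : ℝ) / (M * L) ≤
          ((Finset.univ.filter (fun ξ : Fin k → ZMod 2 => f ξ = true)).card : ℝ) / 2 ^ k
            + ε / 2 :=
  compose_phf_kwise_l1_general n q k M L hM ε hε H R hH hR
end
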